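/- Let q be a prime power and let k, n, m be integers with 1 < k < n ≤ m. Then there exists a full weight spectrum (FWS) [n,k]_{q^m/q} rank-metric code, i.e., an [n,k]_{q^m/q} code C with WS(C) = {1, 2, …, n}, if and only if n < 2^k. -/

import Mathlib

/-- The rank weight of a vector `v ∈ L^n`, where `L/K` is a field extension:
the `K`-dimension of the `K`-span of the entries of `v`. -/
noncomputable def rankWeight (K : Type*) [Field K] {L : Type*} [Field L] [Algebra K L]
    {n : ℕ} (v : Fin n → L) : ℕ :=
  Module.finrank K (Submodule.span K (Set.range v))

/-- The weight spectrum of a rank-metric code `C ⊆ L^n`: the set of rank weights of its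
nonzero codewords. -/
noncomputable def weightSpectrum (K : Type*) [Field K] {L : Type*} [Field L] [Algebra K L]
    {n : ℕ} (C : Submodule L (Fin n → L)) : Set ℕ :=
  {w | ∃ c ∈ C, c ≠ 0 ∧ rankWeight K c = w}

/-- A rank-metric code `C ⊆ L^n` is nondegenerate if for every nonzero `x ∈ K^n` there is a
codeword `c ∈ C` with `∑ j, x j • c j ≠ 0`. -/
def IsNondegenerate (K : Type*) [Field K] {L : Type*} [Field L] [Algebra K L]
    {n : ℕ} (C : Submodule L (Fin n → L)) : Prop :=
  ∀ x : Fin n → K, x ≠ 0 → ∃ c ∈ C, (∑ j, x j • c j) ≠ 0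

/-!
A codeword `c` is the `K`-linear functional `y ↦ ∑ yⱼ • cⱼ` on `Kⁿ`, and its rank weight is the
rank of that functional. Suppose a space of such functionals of dimension `k` has, for every
`ε < j ≤ s`, a functional whose rank `r` satisfies `r ≤ j ≤ r + ε`. Taking `j = ε + 1` gives a
nonzero `f₁` of rank at most `ε + 1`; restricting everything to `ker f₁` kills `f₁`, so the
dimension drops, and lowers each rank by at most `ε + 1`, so the hypothesis survives with tolerance
`2ε + 1`. By induction `s + 1 ≤ (ε + 1) 2^k`, and an FWS code is the case `ε = 0`, `s = n`.

Conversely, if `k ≤ n < 2^k`, split `n` elements of `L` that are independent over `K` into `k`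
nonempty blocks, each at most one longer than all previous blocks together. The code generated by
the blocks has dimension `k`, a sum of blocks has weight equal to its length, and every `w ≤ n` is
the total length of some set of blocks.
-/

open Module Submodule LinearMap Finset

section RankNullity

variable {K U W : Type*} [Field K] [AddCommGroup U] [Module K U] [FiniteDimensional K U]
  [AddCommGroup W] [Module K W]

theorem finrank_range_le_finrank_range_domRestrict_ker_add (f g : U →ₗ[K] W) :
    finrank K (range f) ≤ finrank K (range (f.domRestrict (ker g))) + finrank K (range g) := by
  have hf := f.finrank_range_add_finrank_ker
  have hg := g.finrank_range_add_finrank_ker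
  have hfg := (f.domRestrict (ker g)).finrank_range_add_finrank_ker
  have hker : finrank K (ker (f.domRestrict (ker g))) ≤ finrank K (ker f) := by
    rw [ker_domRestrict, ← finrank_map_subtype_eq]
    exact finrank_mono (map_comap_le _ _)
  omega

theorem finrank_map_lt_of_mem_ker {V : Submodule K U} {φ : U →ₗ[K] W} {x : U} (hxV : x ∈ V)
    (hx : x ≠ 0) (hφx : φ x = 0) : finrank K (V.map φ) < finrank K V := by
  rw [← range_domRestrict, ← (φ.domRestrict V).finrank_range_add_finrank_ker,
    lt_add_iff_pos_right]
  refine one_le_finrank_iff.mpr ((Submodule.ne_bot_iff _).mpr ⟨⟨x, hxV⟩, hφx, ?_⟩)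
  simpa using hx

end RankNullity

section SubsetSums

theorem exists_finset_sum_eq_of_le_sum_add_one (b : ℕ → ℕ) (k : ℕ)
    (hb : ∀ i < k, b i ≤ ∑ t ∈ range i, b t + 1) :
    ∀ w ≤ ∑ t ∈ range k, b t, ∃ T : Finset (Fin k), ∑ i ∈ T, b i = w := by
  induction k with
  | zero => exact fun w hw => ⟨∅, by simp_all⟩
  | succ k ih =>
    intro w hw
    rw [sum_range_succ] at hw
    have ih' := ih fun i hi => hb i (by omega)
    by_cases hwk : w ≤ ∑ t ∈ range k, b t
    · obtain ⟨T, hT⟩ := ih' w hwk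
      exact ⟨T.map Fin.castSuccEmb, by simpa using hT⟩
    · obtain ⟨T, hT⟩ := ih' (w - b k) (by omega)
      refine ⟨insert (Fin.last k) (T.map Fin.castSuccEmb), ?_⟩
      rw [sum_insert (by simp), sum_map]
      simp only [Fin.val_last, Fin.coe_castSuccEmb, Fin.val_castSucc, hT]
      have := hb k (by omega)
      omega

theorem exists_block_sizes {n k : ℕ} (hkn : k ≤ n) (hn : n < 2 ^ k) :
    ∃ b : ℕ → ℕ, (∀ i < k, 0 < b i ∧ b i ≤ ∑ t ∈ range i, b t + 1) ∧
      ∑ t ∈ range k, b t = n := by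
  -- `s i` is the total size of the first `i` blocks: it doubles as long as the remaining
  -- `k - i` blocks can still get one element each.
  set s : ℕ → ℕ := fun i => min (2 ^ i - 1) (n - (k - i))
  have hs : ∀ i, s i ≤ s (i + 1) ∧ s (i + 1) ≤ 2 * s i + 1 ∧ (i < k → s i < s (i + 1)) := by
    intro i
    have := Nat.one_le_two_pow (n := i)
    have : 2 ^ (i + 1) = 2 * 2 ^ i := by ring
    simp only [s]
    omega
  have hsum : ∀ i, ∑ t ∈ range i, (s (t + 1) - s t) = s i := fun i => by
    rw [sum_range_tsub (monotone_nat_of_le_succ fun i => (hs i).1)]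
    simp [s]
  refine ⟨fun t => s (t + 1) - s t, fun i hi => ?_, ?_⟩
  · have := hs i
    dsimp only
    rw [hsum]
    omega
  · rw [hsum]
    simp only [s]
    omega

theorem exists_surjective_card_filter_eq_sum {ι : Type*} [Fintype ι] [DecidableEq ι] {n : ℕ}
    (b : ι → ℕ) (hb : ∀ i, 0 < b i) (hn : ∑ i, b i = n) :
    ∃ p : Fin n → ι, Function.Surjective p ∧
      ∀ T : Finset ι, #{j | p j ∈ T} = ∑ i ∈ T, b i := by
  let e : Fin n ≃ Σ i, Fin (b i) := (Fintype.equivFinOfCardEq (by simp [hn])).symm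
  refine ⟨fun j => (e j).1, fun i => ⟨e.symm ⟨i, ⟨0, hb i⟩⟩, by simp⟩, fun T => ?_⟩
  rw [card_equiv e (t := T.sigma fun _ => univ) (by simp), card_sigma]
  simp

theorem exists_surjective_forall_exists_card_filter_eq {n k : ℕ} (hkn : k ≤ n)
    (hn : n < 2 ^ k) :
    ∃ p : Fin n → Fin k, Function.Surjective p ∧
      ∀ w ≤ n, ∃ T : Finset (Fin k), #{j | p j ∈ T} = w := by
  obtain ⟨b, hb, hbn⟩ := exists_block_sizes hkn hn
  obtain ⟨p, hp, hcard⟩ := exists_surjective_card_filter_eq_sum (fun i : Fin k => b i)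
    (fun i => (hb i i.2).1) (by rw [Fin.sum_univ_eq_sum_range, hbn])
  refine ⟨p, hp, fun w hw => ?_⟩
  obtain ⟨T, hT⟩ :=
    exists_finset_sum_eq_of_le_sum_add_one b k (fun i hi => (hb i hi).2) w (hbn ▸ hw)
  exact ⟨T, (hcard T).trans hT⟩

end SubsetSums

section RankMetric

variable {K L : Type*} [Field K] [Field L] [Algebra K L]

theorem succ_le_mul_two_pow_of_forall_exists_finrank_range {U : Type*} [AddCommGroup U]
    [Module K U] [FiniteDimensional K U] {V : Submodule L (U →ₗ[K] L)} {k : ℕ}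
    (hV : finrank L V ≤ k) {ε s : ℕ}
    (hdense : ∀ j, ε < j → j ≤ s →
      ∃ f ∈ V, finrank K (range f) ≤ j ∧ j ≤ finrank K (range f) + ε) :
    s + 1 ≤ (ε + 1) * 2 ^ k := by
  induction k generalizing U ε s with
  | zero =>
    by_contra! hs
    obtain ⟨f, hfV, -, hf⟩ := hdense s (by omega) le_rfl
    have hf0 : f = 0 := by simpa [finrank_eq_zero.mp (Nat.le_zero.mp hV)] using hfV
    rw [hf0, LinearMap.range_zero, finrank_bot] at hf
    omega
  | succ k ih =>
    by_cases hs : s ≤ 2 * ε + 1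
    · have := Nat.one_le_two_pow (n := k)
      rw [pow_succ]
      nlinarith
    obtain ⟨f₁, hf₁V, hf₁, hf₁'⟩ := hdense (ε + 1) (by omega) (by omega)
    have hf₁0 : f₁ ≠ 0 := by
      rintro rfl
      rw [LinearMap.range_zero, finrank_bot] at hf₁'
      omega
    set restrict := lcomp L L (ker f₁).subtype
    have hdim : finrank L (V.map restrict) ≤ k := by
      have := finrank_map_lt_of_mem_ker hf₁V hf₁0
        (show restrict f₁ = 0 from LinearMap.ext fun u => u.2)
      omega
    have := ih hdim (ε := 2 * ε + 1) (s := s) fun j hj hjs => by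
      obtain ⟨f, hfV, hf, hf'⟩ := hdense j (by omega) hjs
      have hle := finrank_range_le_finrank_range_domRestrict_ker_add f f₁
      have hmono := finrank_mono (range_domRestrict_le_range f (ker f₁))
      exact ⟨f.domRestrict (ker f₁), mem_map_of_mem hfV, by omega, by omega⟩
    rw [pow_succ]
    linarith

theorem rankWeight_eq_finrank_range {n : ℕ} (c : Fin n → L) :
    rankWeight K c = finrank K (range (Fintype.linearCombination K c)) := by
  rw [Fintype.range_linearCombination]
  rfl

theorem lt_two_pow_finrank_of_weightSpectrum_eq_Icc {n : ℕ} {C : Submodule L (Fin n → L)}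
    (hC : weightSpectrum K C = Set.Icc 1 n) : n < 2 ^ finrank L C := by
  have := succ_le_mul_two_pow_of_forall_exists_finrank_range
    (V := C.map (Fintype.bilinearCombination K L)) (finrank_map_le _ _) (ε := 0) (s := n)
    fun j hj hjn => by
      obtain ⟨c, hcC, -, hc⟩ : j ∈ weightSpectrum K C := hC ▸ ⟨hj, hjn⟩
      rw [rankWeight_eq_finrank_range] at hc
      exact ⟨_, mem_map_of_mem hcC, hc.le, hc.ge⟩
  omega

theorem rankWeight_le {n : ℕ} (c : Fin n → L) : rankWeight K c ≤ n :=
  (finrank_range_le_card (R := K) c).trans_eq (Fintype.card_fin n)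

theorem rankWeight_pos_iff {n : ℕ} {c : Fin n → L} : 0 < rankWeight K c ↔ c ≠ 0 := by
  have := FiniteDimensional.span_of_finite K (Set.finite_range c)
  rw [rankWeight, Nat.pos_iff_ne_zero, Ne, Submodule.finrank_eq_zero, span_eq_bot,
    Set.forall_mem_range, Ne, funext_iff]
  rfl

theorem weightSpectrum_subset_Icc {n : ℕ} (C : Submodule L (Fin n → L)) :
    weightSpectrum K C ⊆ Set.Icc 1 n := by
  rintro _ ⟨c, -, hc, rfl⟩
  exact ⟨rankWeight_pos_iff.mpr hc, rankWeight_le c⟩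

theorem rankWeight_indicator {n : ℕ} {γ : Fin n → L} (hγ : LinearIndependent K γ)
    (s : Finset (Fin n)) : rankWeight K ((s : Set (Fin n)).indicator γ) = #s := by
  have hspan : span K (Set.range ((s : Set (Fin n)).indicator γ)) = span K (γ '' s) := by
    rw [← Set.piecewise_eq_indicator, Set.range_piecewise, span_union, sup_eq_left]
    exact span_le.mpr fun _ ⟨_, _, hx⟩ => hx ▸ zero_mem _
  rw [rankWeight, hspan, Set.image_eq_range]
  exact (finrank_span_eq_card (hγ.comp _ Subtype.val_injective)).trans (by simp)

theorem exists_weightSpectrum_eq_Icc {n k : ℕ} (hkn : k ≤ n) (hn : n < 2 ^ k)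
    (hnL : n ≤ finrank K L) :
    ∃ C : Submodule L (Fin n → L), finrank L C = k ∧ weightSpectrum K C = Set.Icc 1 n := by
  classical
  obtain ⟨γ, hγ⟩ := exists_linearIndependent_of_le_finrank hnL
  obtain ⟨p, hp, hcard⟩ := exists_surjective_forall_exists_card_filter_eq hkn hn
  let blocks : (Fin k → L) →ₗ[L] (Fin n → L) := mulLeft L γ ∘ₗ funLeft L L p
  have hinj : Function.Injective blocks := by
    intro x y hxy
    funext i
    obtain ⟨j, rfl⟩ := hp i
    exact mul_left_cancel₀ (hγ.ne_zero j) (congrFun hxy j)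
  refine ⟨range blocks, by rw [finrank_range_of_inj hinj, finrank_fin_fun], ?_⟩
  refine (weightSpectrum_subset_Icc _).antisymm fun w ⟨hw, hwn⟩ => ?_
  obtain ⟨T, hT⟩ := hcard w hwn
  have hblocks : blocks ((T : Set (Fin k)).indicator 1) =
      (({j | p j ∈ T} : Finset (Fin n)) : Set (Fin n)).indicator γ := by
    funext j
    simp [blocks, Set.indicator_apply]
  have hweight := (rankWeight_indicator hγ _).trans hT
  exact ⟨_, ⟨_, hblocks⟩, rankWeight_pos_iff.mp (hweight ▸ hw), hweight⟩

end RankMetric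

theorem exists_FWS_iff_of_le_general (m n k : ℕ)
    (hkn : k < n) (hnm : n ≤ m)
    (K L : Type) [Field K] [Field L] [Algebra K L]
    (hdeg : Module.finrank K L = m) :
    (∃ C : Submodule L (Fin n → L), Module.finrank L C = k ∧
        weightSpectrum K C = Set.Icc 1 n) ↔ n < 2 ^ k := by
  constructor
  · rintro ⟨C, rfl, hC⟩
    exact lt_two_pow_finrank_of_weightSpectrum_eq_Icc hC
  · intro hn
    exact exists_weightSpectrum_eq_Icc hkn.le hn (hdeg ▸ hnm)

/-- Characterization of full weight spectrum codes, case n ≤ m: an FWS [n,k]_{q^m/q} code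
(one with weight spectrum {1,…,n}) exists if and only if n < 2^k. -/
theorem exists_FWS_iff_of_le (q m n k : ℕ) (hq : IsPrimePow q)
    (hk : 1 < k) (hkn : k < n) (hnm : n ≤ m)
    (K L : Type) [Field K] [Fintype K] [Field L] [Algebra K L]
    (hcard : Fintype.card K = q) (hdeg : Module.finrank K L = m) :
    (∃ C : Submodule L (Fin n → L), Module.finrank L C = k ∧
        weightSpectrum K C = Set.Icc 1 n) ↔ n < 2 ^ k :=
  exists_FWS_iff_of_le_general m n k hkn hnm K L hdeg
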